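/- For every real number l > 0 and every natural number k, one has Γ(k + 3/2) · Γ(1/(2l)) = l^{k+1} · (∏_{j=0}^{k} (2j+1)/(2jl+1)) · Γ(1/2) · Γ(k + 1 + 1/(2l)). In particular, for integer l ≥ 2 the value m* = ∏_{j=0}^{k}(2j+1)/(2jl+1) equals the ratio (∫_0^Ω Sn^{2k+2} dθ)/(∫_0^Ω Cs^{2(k+1)l} dθ) of the Gamma-function expressions (2/l^{k+3/2})·Γ(k+3/2)·Γ(1/(2l))/Γ(k+3/2+1/(2l)) and (2/l^{1/2})·Γ(1/2)·Γ(k+1+1/(2l))/Γ(k+3/2+1/(2l)). -/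

import Mathlib

/-!
Both sides are reduced to `Γ(1/2)Γ(1/(2l))` by `Γ(a + n) = a(a+1)⋯(a+n-1) Γ(a)`, applied with
`a = 1/2` and `a = 1/(2l)`, `n = k + 1`; the factor-by-factor ratio of the two Pochhammer products
is `(1/2 + j)/(1/(2l) + j) = l (2j+1)/(2jl+1)`. The ratio of integrals then only differs by the
power `l^{k+3/2} / l^{1/2} = l^{k+1}`.
-/

open Finset

namespace Real

theorem Gamma_add_nat_eq_prod_mul_Gamma {a : ℝ} {n : ℕ} (ha : ∀ j < n, a + j ≠ 0) :
    Gamma (a + n) = (∏ j ∈ range n, (a + j)) * Gamma a := by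
  induction n with
  | zero => simp
  | succ n ih =>
    rw [Nat.cast_succ, ← add_assoc, Gamma_add_one (ha n n.lt_succ_self),
      ih fun j hj => ha j (hj.trans n.lt_succ_self), prod_range_succ]
    ring

theorem Gamma_add_nat_mul_Gamma {a b : ℝ} {n : ℕ} (ha : ∀ j < n, a + j ≠ 0)
    (hb : ∀ j < n, b + j ≠ 0) :
    Gamma (a + n) * Gamma b = (∏ j ∈ range n, (a + j) / (b + j)) * Gamma a * Gamma (b + n) := by
  have hprod : ∏ j ∈ range n, (b + j) ≠ 0 :=
    prod_ne_zero_iff.mpr fun j hj => hb j (mem_range.mp hj)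
  rw [Gamma_add_nat_eq_prod_mul_Gamma ha, Gamma_add_nat_eq_prod_mul_Gamma hb, prod_div_distrib]
  field_simp

end Real

theorem one_half_add_div_one_div_two_mul_add {l : ℝ} (hl : 0 < l) (j : ℝ) (hj : 0 ≤ j) :
    (1 / 2 + j) / (1 / (2 * l) + j) = l * ((2 * j + 1) / (2 * j * l + 1)) := by
  have : 0 < 2 * j * l + 1 := by positivity
  field_simp
  ring

theorem Gamma_add_three_halves_mul_Gamma_inv_two_mul (k : ℕ) {l : ℝ} (hl : 0 < l) :
    Real.Gamma ((k : ℝ) + 3 / 2) * Real.Gamma (1 / (2 * l)) =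
      l ^ (k + 1) * (∏ j ∈ range (k + 1), (2 * (j : ℝ) + 1) / (2 * (j : ℝ) * l + 1)) *
        Real.Gamma (1 / 2) * Real.Gamma ((k : ℝ) + 1 + 1 / (2 * l)) := by
  have hhalf : (k : ℝ) + 3 / 2 = 1 / 2 + ((k + 1 : ℕ) : ℝ) := by push_cast; ring
  have hinv : (k : ℝ) + 1 + 1 / (2 * l) = 1 / (2 * l) + ((k + 1 : ℕ) : ℝ) := by push_cast; ring
  rw [hhalf, hinv, Real.Gamma_add_nat_mul_Gamma (fun _ _ => by positivity)
    (fun _ _ => by positivity)]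
  congr 2
  rw [prod_congr rfl fun (j : ℕ) _ => one_half_add_div_one_div_two_mul_add hl j j.cast_nonneg,
    ← pow_card_mul_prod, card_range]

theorem mStar_eq_ratio_of_Gamma_expressions (k : ℕ) {l : ℝ} (hl : 0 < l) :
    (∏ j ∈ range (k + 1), (2 * (j : ℝ) + 1) / (2 * (j : ℝ) * l + 1)) =
      (2 / l ^ ((k : ℝ) + 3 / 2) * Real.Gamma ((k : ℝ) + 3 / 2) * Real.Gamma (1 / (2 * l)) /
          Real.Gamma ((k : ℝ) + 3 / 2 + 1 / (2 * l))) /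
        (2 / l ^ ((1 : ℝ) / 2) * Real.Gamma (1 / 2) * Real.Gamma ((k : ℝ) + 1 + 1 / (2 * l)) /
          Real.Gamma ((k : ℝ) + 3 / 2 + 1 / (2 * l))) := by
  have hpow : l ^ ((k : ℝ) + 3 / 2) = l ^ ((1 : ℝ) / 2) * l ^ (k + 1) := by
    rw [show (k : ℝ) + 3 / 2 = 1 / 2 + ((k + 1 : ℕ) : ℝ) by push_cast; ring,
      Real.rpow_add hl, Real.rpow_natCast]
  have hC : 0 < Real.Gamma ((k : ℝ) + 3 / 2 + 1 / (2 * l)) := Real.Gamma_pos_of_pos (by positivity)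
  have hD : 0 < Real.Gamma (1 / 2) := Real.Gamma_pos_of_pos (by norm_num)
  have hE : 0 < Real.Gamma ((k : ℝ) + 1 + 1 / (2 * l)) := Real.Gamma_pos_of_pos (by positivity)
  have hsqrt : 0 < l ^ ((1 : ℝ) / 2) := Real.rpow_pos_of_pos hl _
  rw [hpow, mul_assoc (2 / _), Gamma_add_three_halves_mul_Gamma_inv_two_mul k hl]
  generalize ∏ j ∈ range (k + 1), (2 * (j : ℝ) + 1) / (2 * (j : ℝ) * l + 1) = m
  field_simp

theorem mStar_gamma_identity (k : ℕ) :
    (∀ l : ℝ, 0 < l →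
      Real.Gamma ((k : ℝ) + 3 / 2) * Real.Gamma (1 / (2 * l)) =
        l ^ (k + 1) * (∏ j ∈ Finset.range (k + 1),
            (2 * (j : ℝ) + 1) / (2 * (j : ℝ) * l + 1)) *
          Real.Gamma (1 / 2) * Real.Gamma ((k : ℝ) + 1 + 1 / (2 * l))) ∧
    (∀ l : ℕ, 2 ≤ l →
      (∏ j ∈ Finset.range (k + 1),
          (2 * (j : ℝ) + 1) / (2 * (j : ℝ) * (l : ℝ) + 1)) =
        (2 / (l : ℝ) ^ ((k : ℝ) + 3 / 2) * Real.Gamma ((k : ℝ) + 3 / 2) *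
            Real.Gamma (1 / (2 * (l : ℝ))) /
            Real.Gamma ((k : ℝ) + 3 / 2 + 1 / (2 * (l : ℝ)))) /
        (2 / (l : ℝ) ^ ((1 : ℝ) / 2) * Real.Gamma (1 / 2) *
            Real.Gamma ((k : ℝ) + 1 + 1 / (2 * (l : ℝ))) /
            Real.Gamma ((k : ℝ) + 3 / 2 + 1 / (2 * (l : ℝ))))) :=
  ⟨fun _ hl => Gamma_add_three_halves_mul_Gamma_inv_two_mul k hl,
    fun _ hl => mStar_eq_ratio_of_Gamma_expressions k (by positivity)⟩
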